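/- arXiv:2505.20117 — 4 statements merged into one kernel-verified Lean document; each statement's English description precedes it below -/
import Mathlib

section
/- Let Q be a field of characteristic different from 2, a, b ∈ Q* with a, b, ab non-squares, and (X, Y, Z) ∈ Q³ a nonzero solution of X² - aY² - bZ² = 0 with β = X + Y√a ∈ Q(√a) and α = 2(X + Z√b) ∈ Q(√b). Then E(√β) = E(√α), where E = Q(√a, √b). -/
open IntermediateField

/-- Let `Q` be a field of characteristic `≠ 2`, `a, b ∈ Q*` with `a`, `b`, `ab`
non-squares, and `(X, Y, Z) ≠ 0` a solution of `X² - aY² - bZ² = 0`.  With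
`β = X + Y√a ∈ Q(√a)` and `α = 2(X + Z√b) ∈ Q(√b)` we have `E(√β) = E(√α)`, where
`E = Q(√a, √b)` (all fields realised inside an ambient field `L` containing the relevant
square roots). -/
theorem adjoin_sqrt_beta_eq_adjoin_sqrt_alpha (Q L : Type) [Field Q] [Field L] [Algebra Q L]
    (hchar : ringChar Q ≠ 2)
    (a b : Q) (ha : ¬ IsSquare a) (hb : ¬ IsSquare b) (hab : ¬ IsSquare (a * b))
    (X Y Z : Q) (hXYZ : ¬ (X = 0 ∧ Y = 0 ∧ Z = 0))
    (heq : X ^ 2 - a * Y ^ 2 - b * Z ^ 2 = 0)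
    (sa sb sβ sα : L) (hsa : sa ^ 2 = algebraMap Q L a) (hsb : sb ^ 2 = algebraMap Q L b)
    (hsβ : sβ ^ 2 = algebraMap Q L X + algebraMap Q L Y * sa)
    (hsα : sα ^ 2 = 2 * (algebraMap Q L X + algebraMap Q L Z * sb)) :
    adjoin (adjoin Q {sa, sb} : IntermediateField Q L) {sβ} =
      adjoin (adjoin Q {sa, sb} : IntermediateField Q L) {sα} := by
  set E : IntermediateField Q L := adjoin Q {sa, sb} with hE
  have hinj : Function.Injective (algebraMap Q L) := (algebraMap Q L).injective
  have h2Q : (2 : Q) ≠ 0 := by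
    intro h
    exact hchar (CharP.ringChar_of_prime_eq_zero Nat.prime_two (by exact_mod_cast h))
  have h2L : (2 : L) ≠ 0 := by
    intro h
    exact h2Q (hinj (by rw [map_ofNat, map_zero, h]))
  have ha0 : a ≠ 0 := fun h => ha (h ▸ ⟨0, by ring⟩)
  have hb0 : b ≠ 0 := fun h => hb (h ▸ ⟨0, by ring⟩)
  have heqL : (algebraMap Q L X) ^ 2 - algebraMap Q L a * (algebraMap Q L Y) ^ 2
      - algebraMap Q L b * (algebraMap Q L Z) ^ 2 = 0 := by
    have := congrArg (algebraMap Q L) heq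
    simpa [map_sub, map_mul, map_pow] using this
  set t : L := algebraMap Q L X + algebraMap Q L Y * sa + algebraMap Q L Z * sb with ht
  have key : (sβ * sα) ^ 2 = t ^ 2 := by
    rw [mul_pow, hsβ, hsα, ht]
    linear_combination heqL - (algebraMap Q L Y) ^ 2 * hsa - (algebraMap Q L Z) ^ 2 * hsb
  -- sβ ≠ 0
  have hβne : sβ ≠ 0 := by
    intro h
    rw [h] at hsβ
    by_cases hY : Y = 0
    · have hX : X = 0 := by
        apply hinj
        rw [map_zero]
        simpa [hY] using hsβ.symm
      have hZ : Z = 0 := by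
        have hbz : b * Z ^ 2 = 0 := by rw [hX, hY] at heq; linear_combination -heq
        rcases mul_eq_zero.1 hbz with h | h
        · exact absurd h hb0
        · exact pow_eq_zero_iff (n := 2) (by norm_num) |>.1 h
      exact hXYZ ⟨hX, hY, hZ⟩
    · apply ha
      have h1 : algebraMap Q L (Y ^ 2 * a) = algebraMap Q L (X ^ 2) := by
        rw [map_mul, map_pow, map_pow, ← hsa]
        linear_combination (algebraMap Q L X - algebraMap Q L Y * sa) * hsβ
      have h2 : Y ^ 2 * a = X ^ 2 := hinj h1
      exact ⟨X / Y, by field_simp; linear_combination h2⟩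
  -- sα ≠ 0
  have hαne : sα ≠ 0 := by
    intro h
    rw [h] at hsα
    have hXZ : algebraMap Q L X + algebraMap Q L Z * sb = 0 := by
      have h0 : (2 : L) * (algebraMap Q L X + algebraMap Q L Z * sb) = 0 := by
        linear_combination -hsα
      exact (mul_eq_zero.1 h0).resolve_left h2L
    by_cases hZ : Z = 0
    · have hX : X = 0 := by
        apply hinj; rw [map_zero]
        simpa [hZ] using hXZ
      have hY : Y = 0 := by
        have hay : a * Y ^ 2 = 0 := by rw [hX, hZ] at heq; linear_combination -heq
        rcases mul_eq_zero.1 hay with h | h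
        · exact absurd h ha0
        · exact pow_eq_zero_iff (n := 2) (by norm_num) |>.1 h
      exact hXYZ ⟨hX, hY, hZ⟩
    · apply hb
      have h1 : algebraMap Q L (Z ^ 2 * b) = algebraMap Q L (X ^ 2) := by
        rw [map_mul, map_pow, map_pow, ← hsb]
        linear_combination (algebraMap Q L Z * sb - algebraMap Q L X) * hXZ
      have h2 : Z ^ 2 * b = X ^ 2 := hinj h1
      exact ⟨X / Z, by field_simp; linear_combination h2⟩
  have hcases : sβ * sα = t ∨ sβ * sα = -t := by
    have h0 : (sβ * sα - t) * (sβ * sα + t) = 0 := by linear_combination key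
    rcases mul_eq_zero.1 h0 with h | h
    · exact Or.inl (by linear_combination h)
    · exact Or.inr (by linear_combination h)
  have hsaE : sa ∈ E := subset_adjoin Q _ (by simp)
  have hsbE : sb ∈ E := subset_adjoin Q _ (by simp)
  have hmemE : ∀ (F : IntermediateField E L) (x : L), x ∈ E → x ∈ F := by
    intro F x hx
    exact F.algebraMap_mem ⟨x, hx⟩
  have htE : t ∈ E :=
    add_mem (add_mem (E.algebraMap_mem X) (mul_mem (E.algebraMap_mem Y) hsaE))
      (mul_mem (E.algebraMap_mem Z) hsbE)
  apply le_antisymm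
  · rw [adjoin_le_iff, Set.singleton_subset_iff, SetLike.mem_coe]
    have hsαG : sα ∈ adjoin E {sα} := subset_adjoin _ _ rfl
    have htG : t ∈ adjoin E {sα} := hmemE _ _ htE
    have hαinvG : (sα ^ 2)⁻¹ ∈ adjoin E {sα} := inv_mem (pow_mem hsαG 2)
    rcases hcases with h | h
    · have hx : sβ = t * (sα ^ 2)⁻¹ * sα := by
        field_simp
        linear_combination h
      rw [hx]
      exact mul_mem (mul_mem htG hαinvG) hsαG
    · have hx : sβ = -t * (sα ^ 2)⁻¹ * sα := by
        field_simp
        linear_combination h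
      rw [hx]
      exact mul_mem (mul_mem (neg_mem htG) hαinvG) hsαG
  · rw [adjoin_le_iff, Set.singleton_subset_iff, SetLike.mem_coe]
    have hsβF : sβ ∈ adjoin E {sβ} := subset_adjoin _ _ rfl
    have htF : t ∈ adjoin E {sβ} := hmemE _ _ htE
    have hβinvF : (sβ ^ 2)⁻¹ ∈ adjoin E {sβ} := inv_mem (pow_mem hsβF 2)
    rcases hcases with h | h
    · have hx : sα = t * (sβ ^ 2)⁻¹ * sβ := by
        field_simp
        linear_combination h
      rw [hx]
      exact mul_mem (mul_mem htF hβinvF) hsβF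
    · have hx : sα = -t * (sβ ^ 2)⁻¹ * sβ := by
        field_simp
        linear_combination h
      rw [hx]
      exact mul_mem (mul_mem (neg_mem htF) hβinvF) hsβF
end

section
/- Let Q be a field of characteristic different from 2, a ∈ Q* a non-square, and suppose (X, Y, Z) ∈ Q³ is a nonzero solution of X² - aY² - aZ² = 0. Set β = X + Y√a ∈ Q(√a). Then the norm of β from Q(√a) to Q lies in a·(Q*)², and Q(√a, √β) is a cyclic degree 4 extension of Q. -/
open IntermediateField

set_option maxHeartbeats 1000000 in
/-- Let `Q` be a field of characteristic `≠ 2`, `a ∈ Q*` a non-square, and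
`(X, Y, Z) ≠ 0` a solution of `X² - aY² - aZ² = 0`.  Set `β = X + Y√a ∈ Q(√a)`.  Then the norm
`X² - aY²` of `β` lies in `a·(Q*)²`, and `Q(√a, √β)` is a cyclic extension of `Q` of degree 4
(all fields realised inside an ambient field `L` containing `√a` and `√β`). -/
theorem cyclic_quartic_special_case (Q L : Type) [Field Q] [Field L] [Algebra Q L]
    (hchar : ringChar Q ≠ 2)
    (a : Q) (ha : ¬ IsSquare a)
    (X Y Z : Q) (hXYZ : ¬ (X = 0 ∧ Y = 0 ∧ Z = 0))
    (heq : X ^ 2 - a * Y ^ 2 - a * Z ^ 2 = 0)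
    (sa sβ : L) (hsa : sa ^ 2 = algebraMap Q L a)
    (hsβ : sβ ^ 2 = algebraMap Q L X + algebraMap Q L Y * sa) :
    (∃ w : Q, w ≠ 0 ∧ X ^ 2 - a * Y ^ 2 = a * w ^ 2) ∧
      IsGalois Q (adjoin Q {sa, sβ} : IntermediateField Q L) ∧
      IsCyclic ((adjoin Q {sa, sβ} : IntermediateField Q L) ≃ₐ[Q] (adjoin Q {sa, sβ} : IntermediateField Q L)) ∧
      Nat.card ((adjoin Q {sa, sβ} : IntermediateField Q L) ≃ₐ[Q] (adjoin Q {sa, sβ} : IntermediateField Q L)) = 4 := by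
  have inj : Function.Injective (algebraMap Q L) := (algebraMap Q L).injective
  set A := algebraMap Q L with hA
  have h2 : (2 : Q) ≠ 0 := Ring.two_ne_zero hchar
  have ha0 : a ≠ 0 := fun h => ha ⟨0, by simp [h]⟩
  -- Z ≠ 0
  have hZ : Z ≠ 0 := by
    intro hZ0
    by_cases hY0 : Y = 0
    · refine hXYZ ⟨?_, hY0, hZ0⟩
      have hX2 : X ^ 2 = 0 := by rw [hY0, hZ0] at heq; linear_combination heq
      exact pow_eq_zero_iff (n := 2) (by norm_num) |>.mp hX2
    · subst hZ0
      exact ha ⟨X / Y, by field_simp; linear_combination -heq⟩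
  -- Y ≠ 0
  have hY : Y ≠ 0 := by
    intro hY0
    subst hY0
    exact ha ⟨X / Z, by field_simp; linear_combination -heq⟩
  have hAeq : A X ^ 2 - A a * A Y ^ 2 - A a * A Z ^ 2 = 0 := by
    have := congrArg A heq
    simpa [map_sub, map_mul, map_pow] using this
  -- basic nonvanishing in L
  have hAne : ∀ c : Q, c ≠ 0 → A c ≠ 0 := fun c hc h => hc (inj (by rw [h, map_zero]))
  have hsa0 : sa ≠ 0 := by
    intro h
    exact ha0 (inj (by rw [map_zero, ← hsa, h]; ring))
  have hsaQ : ∀ c : Q, sa ≠ A c := by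
    intro c h
    refine ha ⟨c, inj ?_⟩
    rw [map_mul, ← h, ← hsa]; ring
  -- uniqueness of representation c + d·sa
  have huniq : ∀ c d c' d' : Q, A c + A d * sa = A c' + A d' * sa → c = c' ∧ d = d' := by
    intro c d c' d' h
    by_cases hdd : d = d'
    · subst hdd
      refine ⟨inj ?_, rfl⟩
      have := add_right_cancel h
      exact this
    · exfalso
      have hd : A d - A d' ≠ 0 := sub_ne_zero.mpr fun hh => hdd (inj hh)
      refine hsaQ ((c' - c) / (d - d')) ?_
      rw [map_div₀, map_sub, map_sub]
      field_simp
      linear_combination h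
  -- every element of Q(sa) is c + d·sa
  have hrep : ∀ x ∈ adjoin Q {sa}, ∃ c d : Q, x = A c + A d * sa := by
    intro x hx
    induction hx using IntermediateField.adjoin_induction with
    | mem x hx =>
      rw [Set.mem_singleton_iff] at hx
      exact ⟨0, 1, by rw [hx]; simp⟩
    | algebraMap x => exact ⟨x, 0, by simp [hA]⟩
    | add x y hx hy ihx ihy =>
      obtain ⟨c, d, rfl⟩ := ihx
      obtain ⟨c', d', rfl⟩ := ihy
      exact ⟨c + c', d + d', by rw [map_add, map_add]; ring⟩
    | inv x hx ihx =>
      obtain ⟨c, d, rfl⟩ := ihx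
      by_cases h0 : A c + A d * sa = 0
      · exact ⟨0, 0, by rw [h0]; simp⟩
      · have hN : c ^ 2 - a * d ^ 2 ≠ 0 := by
          intro hN
          by_cases hd0 : d = 0
          · apply h0
            have hc0 : c = 0 := by
              have : c ^ 2 = 0 := by rw [hd0] at hN; linear_combination hN
              exact pow_eq_zero_iff (n := 2) (by norm_num) |>.mp this
            rw [hc0, hd0]; simp
          · exact ha ⟨c / d, by field_simp; linear_combination -hN⟩
        have key : (A c + A d * sa) * (A c - A d * sa) = A (c ^ 2 - a * d ^ 2) := by
          rw [map_sub, map_mul, map_pow, map_pow]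
          linear_combination (- (A d) ^ 2) * hsa
        refine ⟨c / (c ^ 2 - a * d ^ 2), -d / (c ^ 2 - a * d ^ 2), ?_⟩
        have hANe : A (c ^ 2 - a * d ^ 2) ≠ 0 := hAne _ hN
        refine inv_eq_of_mul_eq_one_right ?_
        have hrhs : A (c / (c ^ 2 - a * d ^ 2)) + A (-d / (c ^ 2 - a * d ^ 2)) * sa
            = (A c - A d * sa) * (A (c ^ 2 - a * d ^ 2))⁻¹ := by
          rw [map_div₀, map_div₀, map_neg]
          ring
        rw [hrhs, ← mul_assoc, key, mul_inv_cancel₀ hANe]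
    | mul x y hx hy ihx ihy =>
      obtain ⟨c, d, rfl⟩ := ihx
      obtain ⟨c', d', rfl⟩ := ihy
      refine ⟨c * c' + a * d * d', c * d' + d * c', ?_⟩
      rw [map_add, map_mul, map_mul, map_add, map_mul, map_mul, map_mul]
      linear_combination (A d * A d') * hsa
  -- β = X + Y√a is nonzero
  have hsβ0 : sβ ≠ 0 := by
    intro h
    have h0 : A X + A Y * sa = A 0 + A 0 * sa := by
      rw [← hsβ, h]; simp
    exact hY (huniq X Y 0 0 h0).2
  have hβL0 : A X + A Y * sa ≠ 0 := by
    rw [← hsβ]; exact pow_ne_zero 2 hsβ0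
  -- the quadratic subfield
  have hsaK : sa ∈ adjoin Q {sa} := subset_adjoin Q {sa} rfl
  have hintsa : IsIntegral Q sa :=
    ⟨Polynomial.X ^ 2 - Polynomial.C a, Polynomial.monic_X_pow_sub_C a two_ne_zero, by simp [hsa, hA]⟩
  have hminsa : minpoly Q sa = Polynomial.X ^ 2 - Polynomial.C a :=
    (minpoly.eq_of_irreducible_of_monic
      (X_pow_sub_C_irreducible_of_prime Nat.prime_two (fun b hb => ha ⟨b, by rw [← hb]; ring⟩))
      (by simp [hsa, hA]) (Polynomial.monic_X_pow_sub_C a two_ne_zero)).symm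
  haveI : FiniteDimensional Q (adjoin Q {sa} : IntermediateField Q L) :=
    IntermediateField.adjoin.finiteDimensional hintsa
  have hfinK : Module.finrank Q (adjoin Q {sa} : IntermediateField Q L) = 2 := by
    rw [IntermediateField.adjoin.finrank hintsa, hminsa, Polynomial.natDegree_X_pow_sub_C]
  -- β as an element of Q(sa)
  set β : (adjoin Q {sa} : IntermediateField Q L) :=
    ⟨A X + A Y * sa, add_mem (IntermediateField.algebraMap_mem _ X)
      (mul_mem (IntermediateField.algebraMap_mem _ Y) hsaK)⟩ with hβ
  -- β is not a square in Q(sa)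
  have hβnot : ∀ γ : (adjoin Q {sa} : IntermediateField Q L), γ ^ 2 ≠ β := by
    rintro ⟨g, hg⟩ h
    obtain ⟨c, d, rfl⟩ := hrep g hg
    have hval : (A c + A d * sa) ^ 2 = A X + A Y * sa := by
      have := congrArg Subtype.val h
      simpa using this
    have hcomp : A (c ^ 2 + a * d ^ 2) + A (2 * c * d) * sa = A X + A Y * sa := by
      rw [map_add, map_mul, map_pow, map_pow, map_mul, map_mul, map_ofNat]
      linear_combination hval - (A d) ^ 2 * hsa
    obtain ⟨h1, h2'⟩ := huniq _ _ _ _ hcomp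
    refine ha ⟨(c ^ 2 - a * d ^ 2) / Z, ?_⟩
    field_simp
    linear_combination -heq - (X + c ^ 2 + a * d ^ 2) * h1 + a * (Y + 2 * c * d) * h2'
  -- the top field as a quadratic extension of Q(sa)
  have hβmap : algebraMap (adjoin Q {sa} : IntermediateField Q L) L β = A X + A Y * sa := rfl
  have hintβ : IsIntegral (adjoin Q {sa} : IntermediateField Q L) sβ :=
    ⟨Polynomial.X ^ 2 - Polynomial.C β, Polynomial.monic_X_pow_sub_C β two_ne_zero, by
      simp [Polynomial.eval₂_sub, hβmap, hsβ]⟩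
  have hminβ : minpoly (adjoin Q {sa} : IntermediateField Q L) sβ
      = Polynomial.X ^ 2 - Polynomial.C β :=
    (minpoly.eq_of_irreducible_of_monic
      (X_pow_sub_C_irreducible_of_prime Nat.prime_two hβnot)
      (by rw [map_sub, map_pow, Polynomial.aeval_X, Polynomial.aeval_C, hβmap, hsβ, sub_self])
      (Polynomial.monic_X_pow_sub_C β two_ne_zero)).symm
  haveI : FiniteDimensional (adjoin Q {sa} : IntermediateField Q L)
      (adjoin (adjoin Q {sa} : IntermediateField Q L) {sβ}) :=
    IntermediateField.adjoin.finiteDimensional hintβ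
  have hfinE : Module.finrank (adjoin Q {sa} : IntermediateField Q L)
      (adjoin (adjoin Q {sa} : IntermediateField Q L) {sβ}) = 2 := by
    rw [IntermediateField.adjoin.finrank hintβ, hminβ, Polynomial.natDegree_X_pow_sub_C]
  have hQE : Module.finrank Q (adjoin (adjoin Q {sa} : IntermediateField Q L) {sβ}) = 4 := by
    haveI : Module.Free (adjoin Q {sa} : IntermediateField Q L)
        (adjoin (adjoin Q {sa} : IntermediateField Q L) {sβ}) := Module.Free.of_divisionRing _ _
    rw [← Module.finrank_mul_finrank Q (adjoin Q {sa} : IntermediateField Q L)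
      (adjoin (adjoin Q {sa} : IntermediateField Q L) {sβ}), hfinK, hfinE]
  have hres : IntermediateField.restrictScalars Q
      (adjoin (adjoin Q {sa} : IntermediateField Q L) {sβ}) = adjoin Q {sa, sβ} := by
    rw [IntermediateField.adjoin_adjoin_left, Set.singleton_union]
  -- sa belongs to Q(sβ)
  have hsβF : sβ ∈ adjoin Q {sβ} := subset_adjoin Q {sβ} rfl
  have hsaF : sa ∈ adjoin Q {sβ} := by
    have hrw : sa = (sβ ^ 2 - A X) * A Y⁻¹ := by
      rw [hsβ, map_inv₀]
      field_simp [hAne Y hY]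
      ring
    rw [hrw]
    exact mul_mem (sub_mem (pow_mem hsβF 2) (IntermediateField.algebraMap_mem _ X))
      (IntermediateField.algebraMap_mem _ Y⁻¹)
  have hFs : (adjoin Q {sa, sβ} : IntermediateField Q L) = adjoin Q {sβ} := by
    apply le_antisymm
    · rw [IntermediateField.adjoin_le_iff]
      rintro x (rfl | rfl)
      · exact hsaF
      · exact hsβF
    · exact IntermediateField.adjoin.mono Q _ _ (Set.singleton_subset_iff.mpr (by right; rfl))
  have hfinrank4 : Module.finrank Q (adjoin Q {sβ} : IntermediateField Q L) = 4 := by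
    rw [← hFs, ← hres]
    exact hQE
  -- the quartic minimal polynomial of sβ over Q
  set p : Polynomial Q := Polynomial.X ^ 4 - Polynomial.C (2 * X) * Polynomial.X ^ 2
    + Polynomial.C (X ^ 2 - a * Y ^ 2) with hp
  have hpmonic : p.Monic := by unfold p; monicity!
  have hpdeg : p.natDegree = 4 := by unfold p; compute_degree!
  have hpβ : Polynomial.aeval sβ p = 0 := by
    rw [hp]
    simp only [map_add, map_sub, map_mul, map_pow, Polynomial.aeval_X, Polynomial.aeval_C,
      map_ofNat]
    linear_combination (sβ ^ 2 - A X + A Y * sa) * hsβ + (A Y) ^ 2 * hsa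
  have hintQβ : IsIntegral Q sβ := ⟨p, hpmonic, by
    simpa [Polynomial.aeval_def] using hpβ⟩
  haveI : FiniteDimensional Q (adjoin Q {sβ} : IntermediateField Q L) :=
    IntermediateField.adjoin.finiteDimensional hintQβ
  have hdeg4 : (minpoly Q sβ).natDegree = 4 := by
    rw [← IntermediateField.adjoin.finrank hintQβ]
    exact hfinrank4
  have hminp : minpoly Q sβ = p :=
    Polynomial.eq_of_monic_of_associated (minpoly.monic hintQβ) hpmonic
      (Polynomial.associated_of_dvd_of_natDegree_le (minpoly.dvd Q sβ hpβ) hpmonic.ne_zero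
        (by rw [hdeg4, hpdeg]))
  -- the power basis of Q(sβ)
  set pb : PowerBasis Q (adjoin Q {sβ} : IntermediateField Q L) :=
    IntermediateField.adjoin.powerBasis hintQβ with hpb
  -- the conjugate square root t = Z·sa/sβ
  have htmem : A Z * sa * sβ⁻¹ ∈ adjoin Q {sβ} :=
    mul_mem (mul_mem (IntermediateField.algebraMap_mem _ Z) hsaF) (inv_mem hsβF)
  set t : (adjoin Q {sβ} : IntermediateField Q L) := ⟨A Z * sa * sβ⁻¹, htmem⟩ with ht
  have htsq' : (A Z * sa) ^ 2 = (A X - A Y * sa) * sβ ^ 2 := by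
    linear_combination ((A Z) ^ 2 + (A Y) ^ 2) * hsa - (A X - A Y * sa) * hsβ - hAeq
  have htsq : (A Z * sa * sβ⁻¹) ^ 2 = A X - A Y * sa := by
    rw [mul_pow (A Z * sa) sβ⁻¹, inv_pow, htsq', mul_assoc,
      mul_inv_cancel₀ (pow_ne_zero 2 hsβ0), mul_one]
  have haev : Polynomial.aeval t (minpoly Q pb.gen) = 0 := by
    rw [hpb, IntermediateField.adjoin.powerBasis_gen, IntermediateField.minpoly_gen, hminp]
    apply Subtype.val_injective
    have hcast : ((Polynomial.aeval t p : (adjoin Q {sβ} : IntermediateField Q L)) : L)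
        = Polynomial.aeval (A Z * sa * sβ⁻¹ : L) p :=
      (Polynomial.aeval_algebraMap_apply L t p).symm
    rw [hcast, ZeroMemClass.coe_zero, hp]
    simp only [map_add, map_sub, map_mul, map_pow, Polynomial.aeval_X, Polynomial.aeval_C,
      map_ofNat, ZeroMemClass.coe_zero]
    linear_combination ((A Z * sa * sβ⁻¹) ^ 2 + (A X - A Y * sa) - 2 * A X) * htsq
      + (A Y) ^ 2 * hsa
  -- the automorphism σ : √β ↦ Z√a/√β
  set σ0 : (adjoin Q {sβ} : IntermediateField Q L) →ₐ[Q] (adjoin Q {sβ} : IntermediateField Q L) :=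
    pb.lift t haev with hσ0
  have hbij : Function.Bijective σ0 :=
    ⟨σ0.toRingHom.injective,
      LinearMap.surjective_of_injective (f := σ0.toLinearMap) σ0.toRingHom.injective⟩
  set σ : (adjoin Q {sβ} : IntermediateField Q L) ≃ₐ[Q] (adjoin Q {sβ} : IntermediateField Q L) :=
    AlgEquiv.ofBijective σ0 hbij with hσ
  set s : (adjoin Q {sβ} : IntermediateField Q L) := AdjoinSimple.gen Q sβ with hs
  set α : (adjoin Q {sβ} : IntermediateField Q L) := ⟨sa, hsaF⟩ with hα
  have hvq : ∀ q : Q, ((algebraMap Q (adjoin Q {sβ} : IntermediateField Q L) q : _) : L) = A q :=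
    fun q => rfl
  have hvs : ((s : _) : L) = sβ := rfl
  have hvα : ((α : _) : L) = sa := rfl
  have hvt : ((t : _) : L) = A Z * sa * sβ⁻¹ := rfl
  have hσs : σ s = t := pb.lift_gen t haev
  have hAYF : algebraMap Q (adjoin Q {sβ} : IntermediateField Q L) Y ≠ 0 := by
    intro h
    exact hY ((map_eq_zero _).mp h)
  have hσα : σ α = -α := by
    have h1 : algebraMap Q (adjoin Q {sβ} : IntermediateField Q L) Y * α
        = s ^ 2 - algebraMap Q (adjoin Q {sβ} : IntermediateField Q L) X := by
      apply Subtype.val_injective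
      push_cast [hvq, hvs, hvα]
      linear_combination -hsβ
    have ht2 : t ^ 2 = algebraMap Q (adjoin Q {sβ} : IntermediateField Q L) X
        - algebraMap Q (adjoin Q {sβ} : IntermediateField Q L) Y * α := by
      apply Subtype.val_injective
      push_cast [hvq, hvt, hvα]
      exact htsq
    have h2 := congrArg σ h1
    rw [map_mul, map_sub, map_pow, AlgEquiv.commutes, AlgEquiv.commutes, hσs, ht2] at h2
    have h3 : algebraMap Q (adjoin Q {sβ} : IntermediateField Q L) Y * σ α
        = algebraMap Q (adjoin Q {sβ} : IntermediateField Q L) Y * (-α) := by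
      rw [h2]; ring
    exact mul_left_cancel₀ hAYF h3
  have hσ2s : σ (σ s) = -s := by
    have hts : t = algebraMap Q (adjoin Q {sβ} : IntermediateField Q L) Z * α * s⁻¹ := by
      apply Subtype.val_injective
      push_cast [hvq, hvt, hvα, hvs, IntermediateField.coe_inv]
      ring
    rw [hσs, hts, map_mul, map_mul, map_inv₀, AlgEquiv.commutes, hσα, hσs]
    apply Subtype.val_injective
    push_cast [hvq, hvt, hvα, hvs, IntermediateField.coe_inv]
    have hAZ : A Z ≠ 0 := hAne Z hZ
    field_simp
  have hσ4 : σ ^ 4 = 1 := by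
    have h4s : (σ ^ 4) s = s := by
      have hpow : (σ ^ 4) s = σ (σ (σ (σ s))) := by
        rw [show (4 : ℕ) = 3 + 1 from rfl, pow_succ, show (3 : ℕ) = 2 + 1 from rfl, pow_succ,
          sq]
        rfl
      rw [hpow, hσ2s, map_neg, map_neg, hσ2s, neg_neg]
    have hext : ((σ ^ 4 : _) : (adjoin Q {sβ} : IntermediateField Q L) →ₐ[Q] (adjoin Q {sβ} : IntermediateField Q L))
        = ((1 : (adjoin Q {sβ} : IntermediateField Q L) ≃ₐ[Q] (adjoin Q {sβ} : IntermediateField Q L)) : _ →ₐ[Q] _) := by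
      apply pb.algHom_ext
      rw [hpb, IntermediateField.adjoin.powerBasis_gen]
      simpa using h4s
    exact AlgEquiv.coe_algHom_injective hext
  have hσ2ne : σ ^ 2 ≠ 1 := by
    intro hcontra
    have h2s : s = -s := by
      have : (σ ^ 2) s = -s := by rw [sq]; exact hσ2s
      rwa [hcontra] at this
    have hL : sβ = -sβ := by
      have := congrArg Subtype.val h2s
      simpa [hvs] using this
    have h2L : A 2 * sβ = 0 := by
      rw [map_ofNat]
      linear_combination hL
    exact hsβ0 ((mul_eq_zero.mp h2L).resolve_left (hAne 2 h2))
  have horder : orderOf σ = 4 := by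
    have hdvd : orderOf σ ∣ 4 := orderOf_dvd_of_pow_eq_one hσ4
    have hnd : ¬ orderOf σ ∣ 2 := fun h => hσ2ne (orderOf_dvd_iff_pow_eq_one.mp h)
    obtain ⟨k, hk2, hke⟩ := (Nat.dvd_prime_pow Nat.prime_two).mp
      ((show (4 : ℕ) = 2 ^ 2 by norm_num) ▸ hdvd)
    interval_cases k
    · exact absurd (by rw [hke]; norm_num) hnd
    · exact absurd (by rw [hke]; norm_num) hnd
    · rw [hke]; norm_num
  have hcard_le : Nat.card ((adjoin Q {sβ} : IntermediateField Q L) ≃ₐ[Q] (adjoin Q {sβ} : IntermediateField Q L)) ≤ 4 := by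
    calc Nat.card ((adjoin Q {sβ} : IntermediateField Q L) ≃ₐ[Q] (adjoin Q {sβ} : IntermediateField Q L))
        ≤ Nat.card ((adjoin Q {sβ} : IntermediateField Q L) →ₐ[Q] (adjoin Q {sβ} : IntermediateField Q L)) :=
          Nat.card_le_card_of_injective _ AlgEquiv.coe_algHom_injective
      _ ≤ Module.finrank Q (adjoin Q {sβ} : IntermediateField Q L) :=
          card_algHom_le_finrank Q _ _
      _ = 4 := hfinrank4
  have hcard : Nat.card ((adjoin Q {sβ} : IntermediateField Q L) ≃ₐ[Q] (adjoin Q {sβ} : IntermediateField Q L)) = 4 :=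
    le_antisymm hcard_le (Nat.le_of_dvd Nat.card_pos (horder ▸ orderOf_dvd_natCard σ))
  have hgal : IsGalois Q (adjoin Q {sβ} : IntermediateField Q L) :=
    IsGalois.of_card_aut_eq_finrank Q (adjoin Q {sβ} : IntermediateField Q L)
      (by rw [hcard, hfinrank4])
  have hcyc : IsCyclic ((adjoin Q {sβ} : IntermediateField Q L) ≃ₐ[Q] (adjoin Q {sβ} : IntermediateField Q L)) :=
    isCyclic_of_orderOf_eq_card σ (by rw [horder, hcard])
  rw [hFs]
  exact ⟨⟨Z, hZ, by linear_combination heq⟩, hgal, hcyc, hcard⟩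
end

section
/- Let q be an odd prime power, k = F_q(x), and let A, B ∈ F_q[x] be squarefree with P an irreducible polynomial dividing A but not B. Suppose (X, Y, Z) is a primitive solution in F_q[x] to X² - AY² - BZ² = 0 and let β = X + Y√A ∈ k(√A). Then the valuation of β at the unique place of k(√A) above P is even. -/
open Polynomial IsDedekindDomain

/-- Descent lemma: if `A` is squarefree and divisible by an irreducible `P`, then
`X² = A·Y²` has no solution with `Y ≠ 0`. -/
private lemma no_sq_sol {Fq : Type} [Field Fq] {A P : Polynomial Fq}
    (hA : Squarefree A) (hP : Irreducible P) (hPA : P ∣ A) :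
    ∀ n : ℕ, ∀ Y X : Polynomial Fq, Y.natDegree = n → Y ≠ 0 → X ^ 2 = A * Y ^ 2 → False := by
  obtain ⟨C, hC⟩ := hPA
  have hPprime : Prime P := hP.prime
  have hPC : ¬ P ∣ C := by
    rintro ⟨D, hD⟩
    exact hP.not_isUnit (hA P ⟨D, by rw [hC, hD]; ring⟩)
  intro n
  induction n using Nat.strong_induction_on with
  | _ n ih =>
    intro Y X hdeg hY hXY
    have hPX : P ∣ X := by
      refine hPprime.dvd_of_dvd_pow (n := 2) ?_
      rw [hXY, hC]
      exact ⟨C * Y ^ 2, by ring⟩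
    obtain ⟨X₁, hX₁⟩ := hPX
    have h1 : P * (P * X₁ ^ 2) = P * (C * Y ^ 2) := by
      have := hXY
      rw [hX₁, hC] at this
      linear_combination this
    have h2 : P * X₁ ^ 2 = C * Y ^ 2 := mul_left_cancel₀ hP.ne_zero h1
    have hPY : P ∣ Y := by
      refine hPprime.dvd_of_dvd_pow (n := 2) ?_
      rcases hPprime.dvd_or_dvd (a := C) (b := Y ^ 2) ⟨X₁ ^ 2, h2.symm⟩ with h | h
      · exact absurd h hPC
      · exact h
    obtain ⟨Y₁, hY₁⟩ := hPY
    have hY₁ne : Y₁ ≠ 0 := by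
      rintro rfl
      exact hY (by rw [hY₁, mul_zero])
    have h3 : P * X₁ ^ 2 = P * (A * Y₁ ^ 2) := by
      rw [h2, hY₁, hC]; ring
    have h4 : X₁ ^ 2 = A * Y₁ ^ 2 := mul_left_cancel₀ hP.ne_zero h3
    refine ih Y₁.natDegree ?_ Y₁ X₁ rfl hY₁ne h4
    rw [← hdeg, hY₁, Polynomial.natDegree_mul hP.ne_zero hY₁ne]
    have := hP.natDegree_pos
    omega

/-- Main auxiliary lemma, stated for an abstract Dedekind domain `T` containing `F_q[x]`
together with a square root `r` of `A`. -/
private lemma aux_main {Fq : Type} [Field Fq] [Fintype Fq] [DecidableEq Fq]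
    (hq : Odd (Fintype.card Fq))
    {A B P X Y Z : Polynomial Fq} (hA : Squarefree A)
    (hP : Irreducible P) (hPA : P ∣ A) (hPB : ¬ P ∣ B)
    (hXYZ : ¬ (X = 0 ∧ Y = 0 ∧ Z = 0))
    (hprim : IsUnit (EuclideanDomain.gcd (EuclideanDomain.gcd X Y) Z))
    (heq : X ^ 2 - A * Y ^ 2 - B * Z ^ 2 = 0)
    (T : Type) [CommRing T] [IsDomain T] [IsDedekindDomain T]
    [Algebra (Polynomial Fq) T]
    (hinj : Function.Injective (algebraMap (Polynomial Fq) T))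
    (r : T) (hrr : r * r = algebraMap (Polynomial Fq) T A)
    (p : HeightOneSpectrum T)
    (hpP : algebraMap (Polynomial Fq) T P ∈ p.asIdeal) :
    IsSquare (p.intValuation (algebraMap (Polynomial Fq) T X +
      algebraMap (Polynomial Fq) T Y * r)) := by
  set ι := algebraMap (Polynomial Fq) T with hι
  -- the contraction of p to Fq[x] is (P)
  have hcomap : Ideal.comap ι p.asIdeal = Ideal.span {P} := by
    have hmax : (Ideal.span {P}).IsMaximal := PrincipalIdealRing.isMaximal_of_irreducible hP
    have hprime : (Ideal.comap ι p.asIdeal).IsPrime := p.isPrime.comap ι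
    refine (hmax.eq_of_le hprime.ne_top ?_).symm
    rw [Ideal.span_le, Set.singleton_subset_iff]
    exact Ideal.mem_comap.mpr hpP
  have hmem_iff : ∀ f : Polynomial Fq, ι f ∈ p.asIdeal ↔ P ∣ f := by
    intro f
    rw [← Ideal.mem_comap, hcomap, Ideal.mem_span_singleton]
  have hlt : ∀ o : T, p.intValuation o < 1 ↔ o ∈ p.asIdeal := by
    intro o
    rw [IsDedekindDomain.HeightOneSpectrum.intValuation_lt_one_iff_dvd,
      Ideal.dvd_span_singleton]
  -- the product β β' = B Z²
  have hprod : (ι X + ι Y * r) * (ι X - ι Y * r) = ι B * (ι Z * ι Z) := by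
    have h2 : X * X - Y * Y * A = B * (Z * Z) := by linear_combination heq
    calc (ι X + ι Y * r) * (ι X - ι Y * r)
        = ι X * ι X - ι Y * ι Y * (r * r) := by ring
      _ = ι (X * X - Y * Y * A) := by rw [hrr]; simp only [map_sub, map_mul]
      _ = ι (B * (Z * Z)) := by rw [h2]
      _ = ι B * (ι Z * ι Z) := by simp only [map_mul]
  have hv := congrArg p.intValuation hprod
  rw [map_mul, map_mul, map_mul] at hv
  have hvB : p.intValuation (ι B) = 1 := by
    rcases lt_or_eq_of_le (IsDedekindDomain.HeightOneSpectrum.intValuation_le_one p (ι B)) with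
      h | h
    · exact absurd ((hmem_iff B).mp ((hlt _).mp h)) hPB
    · exact h
  rw [hvB, one_mul] at hv
  by_cases hβ : ι X + ι Y * r = 0
  · rw [hβ, map_zero]
    exact ⟨0, (mul_zero 0).symm⟩
  by_cases hβ' : ι X - ι Y * r = 0
  · -- impossible: it forces Z = 0 and X² = A Y²
    exfalso
    rw [hβ', map_zero, mul_zero] at hv
    have hZK : ι Z = 0 := by
      by_contra h
      exact IsDedekindDomain.HeightOneSpectrum.intValuation_ne_zero p _ h
        (by rcases mul_eq_zero.mp hv.symm with h' | h' <;> exact h')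
    have hZ0 : Z = 0 := hinj (by rw [hZK, map_zero])
    have hXr : ι X = ι Y * r := by
      have := sub_eq_zero.mp hβ'
      exact this
    have hsq : X ^ 2 = A * Y ^ 2 := by
      apply hinj
      rw [map_pow, map_mul, map_pow]
      show (ι X) ^ 2 = ι A * (ι Y) ^ 2
      rw [hXr, ← hrr]
      ring
    have hYne : Y ≠ 0 := by
      rintro rfl
      apply hXYZ
      refine ⟨?_, rfl, hZ0⟩
      apply hinj
      rw [map_zero, hXr, map_zero, zero_mul]
    exact no_sq_sol hA hP hPA Y.natDegree Y X rfl hYne hsq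
  · -- main case: both β and β' are nonzero
    have ha : p.intValuation (ι X + ι Y * r) ≠ 0 :=
      IsDedekindDomain.HeightOneSpectrum.intValuation_ne_zero p _ hβ
    have ha' : p.intValuation (ι X - ι Y * r) ≠ 0 :=
      IsDedekindDomain.HeightOneSpectrum.intValuation_ne_zero p _ hβ'
    obtain ⟨u, hu⟩ := WithZero.ne_zero_iff_exists.mp ha
    by_cases hev : Even (Multiplicative.toAdd u)
    · obtain ⟨t, ht⟩ := hev
      refine ⟨((Multiplicative.ofAdd t : Multiplicative ℤ) : WithZero (Multiplicative ℤ)), ?_⟩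
      rw [← hu, ← WithZero.coe_mul, WithZero.coe_inj, ← ofAdd_add, ← ht, ofAdd_toAdd]
    · exfalso
      obtain ⟨u', hu'⟩ := WithZero.ne_zero_iff_exists.mp ha'
      have hZne : p.intValuation (ι Z) ≠ 0 := by
        intro h
        rw [h, mul_zero] at hv
        exact mul_ne_zero ha ha' hv
      obtain ⟨z, hz⟩ := WithZero.ne_zero_iff_exists.mp hZne
      have huu : u * u' = z * z := by
        rw [← WithZero.coe_inj, WithZero.coe_mul, WithZero.coe_mul, hu, hu', hz, hv]
      have hadd : Multiplicative.toAdd u + Multiplicative.toAdd u' =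
          Multiplicative.toAdd z + Multiplicative.toAdd z := by
        rw [← toAdd_mul, ← toAdd_mul, huu]
      have hle : Multiplicative.toAdd u ≤ 0 := by
        have h1 : (u : WithZero (Multiplicative ℤ)) ≤ 1 := by
          rw [hu]
          exact IsDedekindDomain.HeightOneSpectrum.intValuation_le_one p _
        rw [← WithZero.coe_one, WithZero.coe_le_coe] at h1
        exact Multiplicative.toAdd_le.mpr h1
      have hle' : Multiplicative.toAdd u' ≤ 0 := by
        have h1 : (u' : WithZero (Multiplicative ℤ)) ≤ 1 := by
          rw [hu']
          exact IsDedekindDomain.HeightOneSpectrum.intValuation_le_one p _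
        rw [← WithZero.coe_one, WithZero.coe_le_coe] at h1
        exact Multiplicative.toAdd_le.mpr h1
      have hodd' : ¬ Even (Multiplicative.toAdd u') := by
        rintro ⟨t', ht'⟩
        exact hev ⟨Multiplicative.toAdd z - t', by omega⟩
      have hmlt : Multiplicative.toAdd u < 0 := by
        have hne : Multiplicative.toAdd u ≠ 0 := fun h => hev (by rw [h]; exact Even.zero)
        omega
      have hmlt' : Multiplicative.toAdd u' < 0 := by
        have hne : Multiplicative.toAdd u' ≠ 0 := fun h => hodd' (by rw [h]; exact Even.zero)
        omega
      have hzlt : Multiplicative.toAdd z < 0 := by omega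
      have hβmem : ι X + ι Y * r ∈ p.asIdeal := by
        rw [← hlt, ← hu, ← WithZero.coe_one, WithZero.coe_lt_coe]
        exact Multiplicative.toAdd_lt.mp (by simpa using hmlt)
      have hβ'mem : ι X - ι Y * r ∈ p.asIdeal := by
        rw [← hlt, ← hu', ← WithZero.coe_one, WithZero.coe_lt_coe]
        exact Multiplicative.toAdd_lt.mp (by simpa using hmlt')
      have hZmem : ι Z ∈ p.asIdeal := by
        rw [← hlt, ← hz, ← WithZero.coe_one, WithZero.coe_lt_coe]
        exact Multiplicative.toAdd_lt.mp (by simpa using hzlt)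
      have hPZ : P ∣ Z := (hmem_iff Z).mp hZmem
      -- P divides X
      have hsummem : ι (X + X) ∈ p.asIdeal := by
        have h := Ideal.add_mem p.asIdeal hβmem hβ'mem
        have e : (ι X + ι Y * r) + (ι X - ι Y * r) = ι (X + X) := by
          rw [map_add]; ring
        rwa [e] at h
      have hPXX : P ∣ X + X := (hmem_iff _).mp hsummem
      have h2u : IsUnit (2 : Polynomial Fq) := by
        have h2 : (2 : Fq) ≠ 0 := by
          intro h
          obtain ⟨n, hpr, hcard⟩ := FiniteField.card Fq (ringChar Fq)
          have hdvd : ringChar Fq ∣ 2 := by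
            rw [← CharP.cast_eq_zero_iff Fq (ringChar Fq) 2]
            exact_mod_cast h
          have : ringChar Fq = 2 := ((Nat.prime_dvd_prime_iff_eq hpr Nat.prime_two).mp hdvd)
          rw [hcard, this] at hq
          have : Even ((2:ℕ) ^ (n:ℕ)) := (Nat.even_pow).mpr ⟨even_two, n.ne_zero⟩
          exact (Nat.not_even_iff_odd.mpr hq) this
        have : (2 : Polynomial Fq) = Polynomial.C (2 : Fq) := by
          rw [map_ofNat]
        rw [this]
        exact Polynomial.isUnit_C.mpr (isUnit_iff_ne_zero.mpr h2)
      have hPX : P ∣ X := by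
        have : P ∣ 2 * X := by rwa [two_mul]
        rcases hP.prime.dvd_or_dvd this with h | h
        · exact absurd (isUnit_of_dvd_unit h h2u) hP.not_isUnit
        · exact h
      -- P divides Y
      obtain ⟨C, hC⟩ := hPA
      have hPC : ¬ P ∣ C := by
        rintro ⟨D, hD⟩
        exact hP.not_isUnit (hA P ⟨D, by rw [hC, hD]; ring⟩)
      have hPY : P ∣ Y := by
        obtain ⟨X₁, hX₁⟩ := hPX
        obtain ⟨Z₁, hZ₁⟩ := hPZ
        have key : P * (C * Y ^ 2) = P * (P * (X₁ ^ 2 - B * Z₁ ^ 2)) := by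
          have : X ^ 2 - B * Z ^ 2 = A * Y ^ 2 := by linear_combination heq
          rw [hX₁, hZ₁, hC] at this
          linear_combination -this
        have key2 : C * Y ^ 2 = P * (X₁ ^ 2 - B * Z₁ ^ 2) :=
          mul_left_cancel₀ hP.ne_zero key
        refine hP.prime.dvd_of_dvd_pow (n := 2) ?_
        rcases hP.prime.dvd_or_dvd (a := C) (b := Y ^ 2)
          ⟨X₁ ^ 2 - B * Z₁ ^ 2, key2⟩ with h | h
        · exact absurd h hPC
        · exact h
      -- contradiction with primitivity
      have : P ∣ EuclideanDomain.gcd (EuclideanDomain.gcd X Y) Z :=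
        EuclideanDomain.dvd_gcd (EuclideanDomain.dvd_gcd hPX hPY) hPZ
      exact hP.not_isUnit (isUnit_of_dvd_unit this hprim)

/-- Let `q` be odd, `k = F_q(x)`, `A, B ∈ F_q[x]` squarefree, and `P` an
irreducible polynomial dividing `A` but not `B`.  Let `(X, Y, Z)` be a primitive polynomial
solution of `X² - AY² - BZ² = 0` and `β = X + Y√A ∈ k(√A)`.  Then `β` has even valuation at
the (unique) place of `k(√A)` above `P`.  Here `K` is the quadratic extension `k(√A)` (a field
containing `sa = √A`), its ring of integers is the integral closure `O` of `F_q[x]` in `K`,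
places of `K` above `P` are height-one primes of `O` containing `P`, and "even valuation" is
expressed as the valuation being a square in `ℤₘ₀ = WithZero (Multiplicative ℤ)`. -/
theorem valuation_beta_even_at_ramified_prime (Fq : Type) [Field Fq] [Fintype Fq] [DecidableEq Fq]
    (hq : Odd (Fintype.card Fq))
    (A B : Polynomial Fq) (hA : Squarefree A) (hB : Squarefree B)
    (P : Polynomial Fq) (hP : Irreducible P) (hPA : P ∣ A) (hPB : ¬ P ∣ B)
    (X Y Z : Polynomial Fq) (hXYZ : ¬ (X = 0 ∧ Y = 0 ∧ Z = 0))
    (hprim : IsUnit (EuclideanDomain.gcd (EuclideanDomain.gcd X Y) Z))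
    (heq : X ^ 2 - A * Y ^ 2 - B * Z ^ 2 = 0)
    (K : Type) [Field K] [Algebra (RatFunc Fq) K]
    (hquad : Module.finrank (RatFunc Fq) K = 2)
    [Algebra (Polynomial Fq) K] [IsScalarTower (Polynomial Fq) (RatFunc Fq) K]
    [IsDedekindDomain (integralClosure (Polynomial Fq) K)]
    (sa : K) (hsa : sa ^ 2 = algebraMap (Polynomial Fq) K A)
    (r : integralClosure (Polynomial Fq) K)
    (hr : (r : K) = sa)
    (p : HeightOneSpectrum (integralClosure (Polynomial Fq) K))
    (hpP : algebraMap (Polynomial Fq) (integralClosure (Polynomial Fq) K) P ∈ p.asIdeal) :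
    IsSquare (p.intValuation
      (algebraMap (Polynomial Fq) (integralClosure (Polynomial Fq) K) X +
        algebraMap (Polynomial Fq) (integralClosure (Polynomial Fq) K) Y * r)) := by
  have hKinj : Function.Injective (algebraMap (Polynomial Fq) K) := by
    rw [IsScalarTower.algebraMap_eq (Polynomial Fq) (RatFunc Fq) K]
    exact (algebraMap (RatFunc Fq) K).injective.comp (RatFunc.algebraMap_injective Fq)
  have hcoe : ∀ f : Polynomial Fq,
      ((algebraMap (Polynomial Fq) (integralClosure (Polynomial Fq) K) f :
        integralClosure (Polynomial Fq) K) : K) = algebraMap (Polynomial Fq) K f :=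
    fun f => rfl
  have hinj : Function.Injective
      (algebraMap (Polynomial Fq) (integralClosure (Polynomial Fq) K)) := by
    intro a b hab
    exact hKinj (by rw [← hcoe, ← hcoe, hab])
  have hrr : r * r = algebraMap (Polynomial Fq) (integralClosure (Polynomial Fq) K) A := by
    apply Subtype.coe_injective
    show (r : K) * (r : K) = _
    rw [hr, ← sq, hsa]
    exact (hcoe A).symm
  exact aux_main hq hA hP hPA hPB hXYZ hprim heq
    (integralClosure (Polynomial Fq) K) hinj r hrr p hpP
end

section
/- Let q be an odd prime power and D = D₁D₂ ∈ F_q[x] a squarefree polynomial with D₁, D₂ coprime, both non-squares. Suppose that for i = 1, 2 and every monic irreducible P dividing D_i, the quadratic residue symbol (D/D_i | P) equals 1 (this is the Legendre symbol of D/D_i modulo P). Then the quadratic Hilbert symbol (D₁, D₂)_P equals 1 for every place P of F_q(x), including the infinite place. -/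
open Polynomial FunctionField IsDedekindDomain

/-- The canonical embedding of `Fq(x)` into its completion at the place at infinity. -/
noncomputable def toFqtInfty (Fq : Type) [Field Fq] [DecidableEq (RatFunc Fq)] :
    RatFunc Fq →+* RatFunc.CompletionAtInfty Fq :=
  letI := RatFunc.inftyValued Fq
  UniformSpace.Completion.coeRingHom

section LegendreDescent

set_option linter.unusedSectionVars false

variable {F : Type*} [Field F]

/-- small field helper -/
lemma isSquare_of_sq_mul_eq {K : Type*} [Field K] {s x t : K} (hs : s ≠ 0)
    (h : s ^ 2 * x = t) (ht : IsSquare t) : IsSquare x := by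
  obtain ⟨r, hr⟩ := ht
  refine ⟨r / s, ?_⟩
  field_simp
  linear_combination h + hr

lemma dvd_of_isSquare_mk {P w : Polynomial F}
    (h : IsSquare (Ideal.Quotient.mk (Ideal.span {P}) w)) : ∃ T, P ∣ T ^ 2 - w := by
  obtain ⟨s, hs⟩ := h
  obtain ⟨T, rfl⟩ := Ideal.Quotient.mk_surjective s
  refine ⟨T, ?_⟩
  rw [← Ideal.Quotient.eq_zero_iff_dvd]
  simp only [map_sub, map_pow, hs]
  ring

lemma isSquare_mk_of_dvd {P w T : Polynomial F} (h : P ∣ T ^ 2 - w) :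
    IsSquare (Ideal.Quotient.mk (Ideal.span {P}) w) := by
  refine ⟨Ideal.Quotient.mk _ T, ?_⟩
  have h0 : Ideal.Quotient.mk (Ideal.span {P}) (T ^ 2 - w) = 0 :=
    (Ideal.Quotient.eq_zero_iff_dvd _ _).mpr h
  simp only [map_sub, map_pow] at h0
  have := sub_eq_zero.mp h0
  rw [← this]; ring

/-- squarefree decomposition in `F[X]` -/
lemma exists_sq_mul_squarefree' :
    ∀ (n : ℕ) (p : Polynomial F), p ≠ 0 → p.natDegree ≤ n →
      ∃ e q : Polynomial F, p = e ^ 2 * q ∧ Squarefree q := by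
  intro n
  induction n using Nat.strong_induction_on with
  | _ n IH =>
    intro p hp hdeg
    by_cases hs : Squarefree p
    · exact ⟨1, p, by ring, hs⟩
    · rw [Squarefree] at hs
      push_neg at hs
      obtain ⟨x, hxp, hxu⟩ := hs
      obtain ⟨w, hw⟩ := hxp
      have hx0 : x ≠ 0 := by rintro rfl; simp at hw; exact hp (by simp [hw])
      have hw0 : w ≠ 0 := by rintro rfl; simp at hw; exact hp hw
      have hxdeg : 0 < x.natDegree := by
        rcases Nat.eq_zero_or_pos x.natDegree with h | h
        · exact absurd (isUnit_iff_degree_eq_zero.mpr (by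
            rw [degree_eq_natDegree hx0, h]; rfl)) hxu
        · exact h
      have hpdeg : p.natDegree = 2 * x.natDegree + w.natDegree := by
        rw [hw, show x * x * w = x ^ 2 * w by ring, natDegree_mul (pow_ne_zero 2 hx0) hw0,
          natDegree_pow]
      have hwlt : w.natDegree < n := by omega
      obtain ⟨e, q, h1, h2⟩ := IH w.natDegree hwlt w hw0 le_rfl
      exact ⟨x * e, q, by rw [hw, h1]; ring, h2⟩

lemma exists_sq_mul_squarefree (p : Polynomial F) (hp : p ≠ 0) :
    ∃ e q : Polynomial F, p = e ^ 2 * q ∧ Squarefree q :=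
  exists_sq_mul_squarefree' p.natDegree p hp le_rfl

/-- CRT-style lifting of square roots mod squarefree modulus -/
lemma sqrt_mod_of_squarefree :
    ∀ (n : ℕ) (b a : Polynomial F), Squarefree b → b.natDegree ≤ n →
      (∀ P : Polynomial F, Irreducible P → P ∣ b → ∃ T, P ∣ T ^ 2 - a) →
      ∃ T, b ∣ T ^ 2 - a := by
  intro n
  induction n using Nat.strong_induction_on with
  | _ n IH =>
    intro b a hsb hdeg h
    by_cases hbu : IsUnit b
    · exact ⟨0, hbu.dvd⟩
    · have hb0 : b ≠ 0 := hsb.ne_zero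
      obtain ⟨P, hP, hPb⟩ := WfDvdMonoid.exists_irreducible_factor hbu hb0
      obtain ⟨c, hc⟩ := hPb
      have hc0 : c ≠ 0 := by rintro rfl; simp at hc; exact hb0 hc
      have hP0 : P ≠ 0 := hP.ne_zero
      have hsc : Squarefree c := Squarefree.squarefree_of_dvd ⟨P, by rw [hc]; ring⟩ hsb
      have hPc : ¬ P ∣ c := by
        intro hdvd
        exact hP.not_isUnit (hsb P (by rw [hc]; exact mul_dvd_mul_left P hdvd))
      have hcop : IsCoprime P c := (hP.coprime_iff_not_dvd).mpr hPc
      have hcdeg : c.natDegree < n := by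
        have : b.natDegree = P.natDegree + c.natDegree := by
          rw [hc, natDegree_mul hP0 hc0]
        have hPpos : 0 < P.natDegree := hP.natDegree_pos
        omega
      obtain ⟨Tc, hTc⟩ := IH c.natDegree hcdeg c a hsc le_rfl
        (fun Q hQ hQc => h Q hQ (hQc.trans ⟨P, by rw [hc]; ring⟩))
      obtain ⟨Tp, hTp⟩ := h P hP ⟨c, hc⟩
      obtain ⟨f, g, hfg⟩ := id hcop
      set T := Tc * (f * P) + Tp * (g * c) with hT
      have h₁ : P ∣ T - Tp := ⟨Tc * f - Tp * f, by rw [hT]; linear_combination Tp * hfg⟩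
      have h₂ : c ∣ T - Tc := ⟨Tp * g - Tc * g, by rw [hT]; linear_combination Tc * hfg⟩
      have hPd : P ∣ T ^ 2 - a := by
        have : T ^ 2 - a = (Tp ^ 2 - a) + (T - Tp) * (T + Tp) := by ring
        rw [this]; exact dvd_add hTp (h₁.mul_right _)
      have hcd : c ∣ T ^ 2 - a := by
        have : T ^ 2 - a = (Tc ^ 2 - a) + (T - Tc) * (T + Tc) := by ring
        rw [this]; exact dvd_add hTc (h₂.mul_right _)
      exact ⟨T, by rw [hc]; exact hcop.mul_dvd hPd hcd⟩

/-- Statement of the Legendre-type existence result, as a def for brevity. -/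
def LegendreSol (a b : Polynomial F) : Prop :=
  ∃ x y z : RatFunc F, ¬(x = 0 ∧ y = 0 ∧ z = 0) ∧
    x ^ 2 - algebraMap (Polynomial F) (RatFunc F) a * y ^ 2 -
      algebraMap (Polynomial F) (RatFunc F) b * z ^ 2 = 0

/-- Hypotheses of the descent. -/
def LegendreHyp (a b : Polynomial F) : Prop :=
  a ≠ 0 ∧ b ≠ 0 ∧ Squarefree a ∧ Squarefree b ∧
  (∀ P : Polynomial F, Irreducible P → P ∣ a → ∃ T, P ∣ T ^ 2 - b) ∧
  (∀ P : Polynomial F, Irreducible P → P ∣ b → ∃ T, P ∣ T ^ 2 - a) ∧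
  (∀ P a₁ b₁ : Polynomial F, Irreducible P → a = P * a₁ → b = P * b₁ →
    ∃ T, P ∣ T ^ 2 + a₁ * b₁)

lemma legendreHyp_symm {a b : Polynomial F} (h : LegendreHyp a b) : LegendreHyp b a := by
  obtain ⟨h1, h2, h3, h4, h5, h6, h7⟩ := h
  exact ⟨h2, h1, h4, h3, h6, h5, fun P b₁ a₁ hP hb ha =>
    (h7 P a₁ b₁ hP ha hb).imp (fun T hT => by rwa [mul_comm a₁ b₁] at hT)⟩

variable [Fintype F]

lemma legendre_base (hodd : Fintype.card F % 2 = 1) {a b : Polynomial F}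
    (ha0 : a ≠ 0) (hb0 : b ≠ 0) (hadeg : a.natDegree = 0) (hbdeg : b.natDegree = 0) :
    LegendreSol a b := by
  obtain ⟨α, hα⟩ := natDegree_eq_zero.mp hadeg
  obtain ⟨β, hβ⟩ := natDegree_eq_zero.mp hbdeg
  have hα0 : α ≠ 0 := by rintro rfl; rw [← hα] at ha0; simp at ha0
  have hβ0 : β ≠ 0 := by rintro rfl; rw [← hβ] at hb0; simp at hb0
  have hf : degree ((X : Polynomial F) ^ 2 - C β) = 2 := degree_X_pow_sub_C (by norm_num) β
  have hg : degree (C (-α) * (X : Polynomial F) ^ 2) = 2 := by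
    simpa using degree_C_mul_X_pow 2 (neg_ne_zero.mpr hα0)
  obtain ⟨s, t, hst⟩ := FiniteField.exists_root_sum_quadratic hf hg hodd
  simp only [eval_sub, eval_add, eval_mul, eval_pow, eval_X, eval_C] at hst
  have h0 : s ^ 2 - α * t ^ 2 - β = 0 := by linear_combination hst
  set κ : F →+* RatFunc F :=
    (algebraMap (Polynomial F) (RatFunc F)).comp (Polynomial.C) with hκ
  refine ⟨κ s, κ t, 1, fun h => one_ne_zero h.2.2, ?_⟩
  rw [← hα, ← hβ]
  have hκ0 : κ s ^ 2 - κ α * κ t ^ 2 - κ β = 0 := by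
    have := congrArg κ h0
    simpa only [map_sub, map_mul, map_pow, map_zero] using this
  show κ s ^ 2 - κ α * κ t ^ 2 - κ β * 1 ^ 2 = 0
  linear_combination hκ0

set_option maxHeartbeats 2000000 in
lemma legendre_core (hodd : Fintype.card F % 2 = 1) (n : ℕ)
    (IH : ∀ m, m < n → ∀ a b : Polynomial F, a.natDegree + b.natDegree ≤ m →
      LegendreHyp a b → LegendreSol a b)
    (a b : Polynomial F) (hdeg : a.natDegree + b.natDegree ≤ n)
    (hab : a.natDegree ≤ b.natDegree) (H : LegendreHyp a b) : LegendreSol a b := by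
  obtain ⟨ha0, hb0, hsa, hsb, h1, h2, h3⟩ := H
  set j := algebraMap (Polynomial F) (RatFunc F) with hj
  have hjinj : Function.Injective j := IsFractionRing.injective _ _
  by_cases hbdeg : b.natDegree = 0
  · exact legendre_base hodd ha0 hb0 (by omega) hbdeg
  -- descent step
  obtain ⟨T₀, hT₀⟩ := sqrt_mod_of_squarefree b.natDegree b a hsb le_rfl h2
  set bm := b * C b.leadingCoeff⁻¹ with hbm
  have hbmM : bm.Monic := monic_mul_leadingCoeff_inv hb0
  set T := T₀ %ₘ bm with hTdef
  have hbbm : b ∣ bm := ⟨C b.leadingCoeff⁻¹, rfl⟩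
  have hTT₀ : b ∣ T - T₀ := by
    rw [hTdef, modByMonic_eq_sub_mul_div T₀ bm]
    have hrw : T₀ - bm * (T₀ /ₘ bm) - T₀ = -(bm * (T₀ /ₘ bm)) := by ring
    rw [hrw]
    exact dvd_neg.mpr (hbbm.mul_right _)
  have hbT : b ∣ T ^ 2 - a := by
    have hr : T ^ 2 - a = (T₀ ^ 2 - a) + (T - T₀) * (T + T₀) := by ring
    rw [hr]; exact dvd_add hT₀ (hTT₀.mul_right _)
  have hTdeg : T.degree < b.degree := by
    have := degree_modByMonic_lt T₀ hbmM
    rwa [hbm, degree_mul_leadingCoeff_inv b hb0] at this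
  obtain ⟨u, hu⟩ := hbT
  by_cases hu0 : u = 0
  · -- a is a perfect square, hence a unit square
    have hTa : a = T ^ 2 := by
      have h' : T ^ 2 - a = 0 := by rw [hu, hu0, mul_zero]
      linear_combination -h'
    exact ⟨j T, 1, 0, fun h => one_ne_zero h.2.1, by rw [hTa, map_pow]; ring⟩
  · obtain ⟨e, u', hudecomp, hsu'⟩ := exists_sq_mul_squarefree u hu0
    have he0 : e ≠ 0 := by rintro rfl; simp at hudecomp; exact hu0 hudecomp
    have hu'0 : u' ≠ 0 := by rintro rfl; simp at hudecomp; exact hu0 hudecomp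
    have hdeg2 : b.natDegree + u.natDegree < 2 * b.natDegree := by
      have hmul : (T ^ 2 - a).natDegree = b.natDegree + u.natDegree := by
        rw [hu, natDegree_mul hb0 hu0]
      have hbound : (T ^ 2 - a).natDegree ≤ max (T ^ 2).natDegree a.natDegree :=
        natDegree_sub_le _ _
      have hTb : (T ^ 2).natDegree < 2 * b.natDegree := by
        rw [natDegree_pow]
        by_cases hT0 : T = 0
        · simp [hT0]; omega
        · have := natDegree_lt_natDegree hT0 hTdeg
          omega
      omega
    have hu'deg : u'.natDegree ≤ u.natDegree := by
      have h5 : u.natDegree = 2 * e.natDegree + u'.natDegree := by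
        rw [hudecomp, natDegree_mul (pow_ne_zero 2 he0) hu'0, natDegree_pow]
      omega
    -- For every irreducible P dividing a, P does not divide e.
    have key_e : ∀ P : Polynomial F, Irreducible P → P ∣ a → ¬ P ∣ e := by
      intro P hP hPa hPe
      have hP2u : P ^ 2 ∣ u := by
        rw [hudecomp]; exact dvd_mul_of_dvd_left (pow_dvd_pow_of_dvd hPe 2) u'
      have hP2 : P ^ 2 ∣ T ^ 2 - a := by rw [hu]; exact hP2u.mul_left b
      have hPT : P ∣ T := by
        have hPT2 : P ∣ T ^ 2 := by
          have hr : T ^ 2 = (T ^ 2 - a) + a := by ring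
          rw [hr]; exact dvd_add ((dvd_pow_self P two_ne_zero).trans hP2) hPa
        exact hP.prime.dvd_of_dvd_pow hPT2
      have hP2a : P ^ 2 ∣ a := by
        have hr : a = T ^ 2 - (T ^ 2 - a) := by ring
        rw [hr]; exact dvd_sub (pow_dvd_pow_of_dvd hPT 2) hP2
      exact hP.not_isUnit (hsa P ((pow_two P) ▸ hP2a))
    have hu'u : u' ∣ u := ⟨e ^ 2, by rw [hudecomp]; ring⟩
    have new_h2 : ∀ P : Polynomial F, Irreducible P → P ∣ u' → ∃ S, P ∣ S ^ 2 - a :=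
      fun P hP hPu' => ⟨T, by rw [hu]; exact (hPu'.trans hu'u).mul_left b⟩
    have new_h1 : ∀ P : Polynomial F, Irreducible P → P ∣ a → ∃ S, P ∣ S ^ 2 - u' := by
      intro P hP hPa
      by_cases hPu' : P ∣ u'
      · exact ⟨0, by simpa using dvd_neg.mpr hPu'⟩
      apply dvd_of_isSquare_mk
      haveI hmax : (Ideal.span {P} : Ideal (Polynomial F)).IsMaximal :=
        PrincipalIdealRing.isMaximal_of_irreducible hP
      letI : Field (Polynomial F ⧸ Ideal.span {P}) := Ideal.Quotient.field _
      have hPe := key_e P hP hPa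
      have hφe : Ideal.Quotient.mk (Ideal.span {P}) e ≠ 0 :=
        fun h => hPe ((Ideal.Quotient.eq_zero_iff_dvd P e).mp h)
      have hφa : Ideal.Quotient.mk (Ideal.span {P}) a = 0 :=
        (Ideal.Quotient.eq_zero_iff_dvd P a).mpr hPa
      by_cases hPb : P ∣ b
      · obtain ⟨a₁, ha₁⟩ := hPa
        obtain ⟨b₁, hb₁⟩ := hPb
        have hP0 : P ≠ 0 := hP.ne_zero
        have hPb₁ : ¬ P ∣ b₁ := fun h =>
          hP.not_isUnit (hsb P (by rw [hb₁]; exact mul_dvd_mul_left P h))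
        have hPT : P ∣ T := by
          apply hP.prime.dvd_of_dvd_pow (n := 2)
          have hTT : T ^ 2 = b * u + a := by rw [← hu]; ring
          rw [hTT, ha₁, hb₁]
          exact dvd_add ⟨b₁ * u, by ring⟩ (dvd_mul_right P a₁)
        obtain ⟨T₁, hT₁⟩ := hPT
        have hcancel : b₁ * (e ^ 2 * u') = P * T₁ ^ 2 - a₁ := by
          apply mul_left_cancel₀ hP0
          calc P * (b₁ * (e ^ 2 * u')) = P * b₁ * u := by rw [hudecomp]; ring
          _ = b * u := by rw [hb₁]
          _ = T ^ 2 - a := hu.symm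
          _ = P * (P * T₁ ^ 2 - a₁) := by rw [hT₁, ha₁]; ring
        obtain ⟨S, hS⟩ := h3 P a₁ b₁ hP ha₁ hb₁
        have hsq_t : IsSquare (Ideal.Quotient.mk (Ideal.span {P}) (-(a₁ * b₁))) := by
          apply isSquare_mk_of_dvd (T := S)
          simpa [sub_neg_eq_add] using hS
        have hφb₁ : Ideal.Quotient.mk (Ideal.span {P}) b₁ ≠ 0 :=
          fun h => hPb₁ ((Ideal.Quotient.eq_zero_iff_dvd P b₁).mp h)
        have heq : (Ideal.Quotient.mk (Ideal.span {P}) b₁ * Ideal.Quotient.mk (Ideal.span {P}) e) ^ 2 *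
            Ideal.Quotient.mk (Ideal.span {P}) u' =
            Ideal.Quotient.mk (Ideal.span {P}) (-(a₁ * b₁)) := by
          have hc := congrArg (Ideal.Quotient.mk (Ideal.span {P})) hcancel
          have hφP : Ideal.Quotient.mk (Ideal.span {P}) P = 0 :=
            (Ideal.Quotient.eq_zero_iff_dvd P P).mpr dvd_rfl
          simp only [map_mul, map_sub, map_pow, map_neg, hφP, zero_mul] at hc ⊢
          linear_combination (Ideal.Quotient.mk (Ideal.span {P}) b₁) * hc
        exact isSquare_of_sq_mul_eq (mul_ne_zero hφb₁ hφe) heq hsq_t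
      · have hφb : Ideal.Quotient.mk (Ideal.span {P}) b ≠ 0 :=
          fun h => hPb ((Ideal.Quotient.eq_zero_iff_dvd P b).mp h)
        obtain ⟨S, hS⟩ := h1 P hP hPa
        have hsqb : IsSquare (Ideal.Quotient.mk (Ideal.span {P}) b) := isSquare_mk_of_dvd hS
        have heq : (Ideal.Quotient.mk (Ideal.span {P}) e) ^ 2 *
            (Ideal.Quotient.mk (Ideal.span {P}) b * Ideal.Quotient.mk (Ideal.span {P}) u') =
            (Ideal.Quotient.mk (Ideal.span {P}) T) ^ 2 := by
          have hc := congrArg (Ideal.Quotient.mk (Ideal.span {P}))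
            (show b * (e ^ 2 * u') = T ^ 2 - a by rw [← hudecomp, ← hu])
          simp only [map_mul, map_sub, map_pow, hφa, sub_zero] at hc
          linear_combination hc
        have hmid : IsSquare (Ideal.Quotient.mk (Ideal.span {P}) b *
            Ideal.Quotient.mk (Ideal.span {P}) u') :=
          isSquare_of_sq_mul_eq hφe heq ⟨Ideal.Quotient.mk (Ideal.span {P}) T, by ring⟩
        have heq2 : (Ideal.Quotient.mk (Ideal.span {P}) b) ^ 2 *
            Ideal.Quotient.mk (Ideal.span {P}) u' =
            (Ideal.Quotient.mk (Ideal.span {P}) b * Ideal.Quotient.mk (Ideal.span {P}) u') *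
            Ideal.Quotient.mk (Ideal.span {P}) b := by ring
        exact isSquare_of_sq_mul_eq hφb heq2 (hmid.mul hsqb)
    have new_h3 : ∀ P a₂ u₂' : Polynomial F, Irreducible P → a = P * a₂ → u' = P * u₂' →
        ∃ S, P ∣ S ^ 2 + a₂ * u₂' := by
      intro P a₂ u₂' hP ha₂ hu₂'
      have hPa : P ∣ a := ⟨a₂, ha₂⟩
      have hP0 : P ≠ 0 := hP.ne_zero
      have hPa₂ : ¬ P ∣ a₂ := fun h =>
        hP.not_isUnit (hsa P (by rw [ha₂]; exact mul_dvd_mul_left P h))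
      have hPu₂' : ¬ P ∣ u₂' := fun h =>
        hP.not_isUnit (hsu' P (by rw [hu₂']; exact mul_dvd_mul_left P h))
      have hPT : P ∣ T := by
        apply hP.prime.dvd_of_dvd_pow (n := 2)
        have hTT : T ^ 2 = b * u + a := by rw [← hu]; ring
        rw [hTT, hudecomp, hu₂', ha₂]
        exact dvd_add ⟨b * (e ^ 2 * u₂'), by ring⟩ (dvd_mul_right P a₂)
      obtain ⟨T₁, hT₁⟩ := hPT
      have hPb : ¬ P ∣ b := by
        intro hPb
        obtain ⟨b₁, hb₁⟩ := hPb
        have hcanc : P * (b₁ * (e ^ 2 * u₂')) = P * T₁ ^ 2 - a₂ := by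
          apply mul_left_cancel₀ hP0
          calc P * (P * (b₁ * (e ^ 2 * u₂'))) = (P * b₁) * (e ^ 2 * (P * u₂')) := by ring
          _ = b * u := by rw [← hb₁, ← hu₂', ← hudecomp]
          _ = T ^ 2 - a := hu.symm
          _ = P * (P * T₁ ^ 2 - a₂) := by rw [hT₁, ha₂]; ring
        have hdvd : P ∣ a₂ := by
          have hr : a₂ = P * T₁ ^ 2 - P * (b₁ * (e ^ 2 * u₂')) := by linear_combination hcanc
          rw [hr]; exact dvd_sub (dvd_mul_right _ _) (dvd_mul_right _ _)
        exact hPa₂ hdvd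
      have hcanc : b * (e ^ 2 * u₂') = P * T₁ ^ 2 - a₂ := by
        apply mul_left_cancel₀ hP0
        calc P * (b * (e ^ 2 * u₂')) = b * (e ^ 2 * (P * u₂')) := by ring
        _ = b * u := by rw [← hu₂', ← hudecomp]
        _ = T ^ 2 - a := hu.symm
        _ = P * (P * T₁ ^ 2 - a₂) := by rw [hT₁, ha₂]; ring
      haveI hmax : (Ideal.span {P} : Ideal (Polynomial F)).IsMaximal :=
        PrincipalIdealRing.isMaximal_of_irreducible hP
      letI : Field (Polynomial F ⧸ Ideal.span {P}) := Ideal.Quotient.field _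
      have goal_sq : IsSquare (Ideal.Quotient.mk (Ideal.span {P}) (-(a₂ * u₂'))) := by
        obtain ⟨Sb, hSb⟩ := h1 P hP hPa
        have hsqb : IsSquare (Ideal.Quotient.mk (Ideal.span {P}) b) := isSquare_mk_of_dvd hSb
        obtain ⟨r, hr⟩ := hsqb
        refine ⟨r * (Ideal.Quotient.mk (Ideal.span {P}) e * Ideal.Quotient.mk (Ideal.span {P}) u₂'), ?_⟩
        have hc := congrArg (Ideal.Quotient.mk (Ideal.span {P})) hcanc
        have hφP : Ideal.Quotient.mk (Ideal.span {P}) P = 0 :=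
          (Ideal.Quotient.eq_zero_iff_dvd P P).mpr dvd_rfl
        simp only [map_mul, map_sub, map_pow, map_neg, hφP, zero_mul] at hc ⊢
        linear_combination (-(Ideal.Quotient.mk (Ideal.span {P}) u₂')) * hc +
          ((Ideal.Quotient.mk (Ideal.span {P}) e) ^ 2 *
            (Ideal.Quotient.mk (Ideal.span {P}) u₂') ^ 2) * hr
      obtain ⟨S', hS'⟩ := dvd_of_isSquare_mk goal_sq
      exact ⟨S', by simpa [sub_neg_eq_add] using hS'⟩
    have hnewhyp : LegendreHyp a u' := ⟨ha0, hu'0, hsa, hsu', new_h1, new_h2, new_h3⟩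
    have hlt : a.natDegree + u'.natDegree < n := by omega
    obtain ⟨x₁, y₁, z₁, hnz, E1⟩ := IH (a.natDegree + u'.natDegree) hlt a u' le_rfl hnewhyp
    have E2 : (j T) ^ 2 - j a = j b * (j e) ^ 2 * (j u') := by
      have h' := congrArg j (show T ^ 2 - a = b * (e ^ 2 * u') by rw [← hudecomp, ← hu])
      simp only [map_sub, map_mul, map_pow] at h'
      linear_combination h'
    refine ⟨x₁ * j T + j a * y₁, x₁ + y₁ * j T, z₁ * j e * j u', ?_, ?_⟩
    · rintro ⟨hx2, hy2, hz2⟩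
      have hje : j e ≠ 0 := fun h => he0 (hjinj (h.trans (map_zero j).symm))
      have hju' : j u' ≠ 0 := fun h => hu'0 (hjinj (h.trans (map_zero j).symm))
      have hjb : j b ≠ 0 := fun h => hb0 (hjinj (h.trans (map_zero j).symm))
      have hz₁ : z₁ = 0 := by
        rcases mul_eq_zero.mp hz2 with h | h
        · rcases mul_eq_zero.mp h with h' | h'
          · exact h'
          · exact absurd h' hje
        · exact absurd h hju'
      have hTa0 : (j T) ^ 2 - j a ≠ 0 := by
        rw [E2]; exact mul_ne_zero (mul_ne_zero hjb (pow_ne_zero 2 hje)) hju'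
      have hzz : y₁ * ((j T) ^ 2 - j a) = 0 := by linear_combination (j T) * hy2 - hx2
      have hy₁ : y₁ = 0 := by
        rcases mul_eq_zero.mp hzz with h | h
        · exact h
        · exact absurd h hTa0
      have hx₁ : x₁ = 0 := by rw [hy₁] at hy2; simpa using hy2
      exact hnz ⟨hx₁, hy₁, hz₁⟩
    · linear_combination ((j T) ^ 2 - j a) * E1 + (j u') * z₁ ^ 2 * E2

theorem legendre_polynomial (hodd : Fintype.card F % 2 = 1) :
    ∀ (n : ℕ) (a b : Polynomial F), a.natDegree + b.natDegree ≤ n →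
      LegendreHyp a b → LegendreSol a b := by
  intro n
  induction n using Nat.strong_induction_on with
  | _ n IH =>
    intro a b hdeg H
    rcases le_or_gt a.natDegree b.natDegree with hle | hlt
    · exact legendre_core hodd n IH a b hdeg hle H
    · obtain ⟨x, y, z, hnz, heq⟩ :=
        legendre_core hodd n IH b a (by omega) hlt.le (legendreHyp_symm H)
      exact ⟨x, z, y, fun h => hnz ⟨h.1, h.2.2, h.2.1⟩, by linear_combination heq⟩

lemma dvd_form_of_hsym {D E : Polynomial F}
    (h : ∀ P : Polynomial F, P.Monic → Irreducible P → P ∣ D →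
      IsSquare (Ideal.Quotient.mk (Ideal.span {P}) E)) :
    ∀ P : Polynomial F, Irreducible P → P ∣ D → ∃ T, P ∣ T ^ 2 - E := by
  intro P hP hPD
  have hP0 : P ≠ 0 := hP.ne_zero
  have hlc : IsUnit (C P.leadingCoeff⁻¹) :=
    isUnit_C.mpr (isUnit_iff_ne_zero.mpr (inv_ne_zero (leadingCoeff_ne_zero.mpr hP0)))
  have hassoc : Associated P (P * C P.leadingCoeff⁻¹) := ⟨hlc.unit, by rw [hlc.unit_spec]⟩
  obtain ⟨T, hT⟩ := dvd_of_isSquare_mk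
    (h _ (monic_mul_leadingCoeff_inv hP0) (hassoc.irreducible hP)
      (hassoc.dvd_iff_dvd_left.mp hPD))
  exact ⟨T, hassoc.dvd_iff_dvd_left.mpr hT⟩


end LegendreDescent

set_option maxHeartbeats 1000000 in
set_option synthInstance.maxHeartbeats 400000 in
/-- Let `q` be odd and `D = D₁D₂ ∈ F_q[x]` squarefree with `D₁, D₂` coprime
non-squares.  Suppose that for `i = 1, 2` and every monic irreducible `P ∣ D_i` the quadratic
residue symbol `(D/D_i | P)` is `1`, i.e. the complementary factor is a square modulo `P`.
Then the quadratic Hilbert symbol `(D₁, D₂)_P` is `1` at every place `P` of `F_q(x)`: the conic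
`X² - D₁Y² - D₂Z² = 0` has a nonzero point in every completion, at all finite places and at the
infinite place. -/
theorem second_type_hilbert_trivial (Fq : Type) [Field Fq] [Fintype Fq]
    [DecidableEq (RatFunc Fq)] (hq : Odd (Fintype.card Fq))
    (D₁ D₂ : Polynomial Fq) (hsf : Squarefree (D₁ * D₂)) (hcop : IsCoprime D₁ D₂)
    (hns₁ : ¬ IsSquare D₁) (hns₂ : ¬ IsSquare D₂)
    (hsym₁ : ∀ P : Polynomial Fq, P.Monic → Irreducible P → P ∣ D₁ →
      IsSquare (Ideal.Quotient.mk (Ideal.span {P}) D₂))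
    (hsym₂ : ∀ P : Polynomial Fq, P.Monic → Irreducible P → P ∣ D₂ →
      IsSquare (Ideal.Quotient.mk (Ideal.span {P}) D₁)) :
    (∀ v : HeightOneSpectrum (Polynomial Fq),
      ∃ x y z : v.adicCompletion (RatFunc Fq), ¬ (x = 0 ∧ y = 0 ∧ z = 0) ∧
        x ^ 2 - algebraMap (RatFunc Fq) (v.adicCompletion (RatFunc Fq))
            (algebraMap (Polynomial Fq) (RatFunc Fq) D₁) * y ^ 2 -
          algebraMap (RatFunc Fq) (v.adicCompletion (RatFunc Fq))
            (algebraMap (Polynomial Fq) (RatFunc Fq) D₂) * z ^ 2 = 0) ∧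
    (∃ x y z : RatFunc.CompletionAtInfty Fq, ¬ (x = 0 ∧ y = 0 ∧ z = 0) ∧
      x ^ 2 - toFqtInfty Fq (algebraMap (Polynomial Fq) (RatFunc Fq) D₁) * y ^ 2 -
        toFqtInfty Fq (algebraMap (Polynomial Fq) (RatFunc Fq) D₂) * z ^ 2 = 0) := by
  have hodd : Fintype.card Fq % 2 = 1 := Nat.odd_iff.mp hq
  have hD₁0 : D₁ ≠ 0 := fun h => hns₁ (by rw [h]; exact ⟨0, by ring⟩)
  have hD₂0 : D₂ ≠ 0 := fun h => hns₂ (by rw [h]; exact ⟨0, by ring⟩)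
  have hsf₁ : Squarefree D₁ := Squarefree.squarefree_of_dvd (dvd_mul_right D₁ D₂) hsf
  have hsf₂ : Squarefree D₂ := Squarefree.squarefree_of_dvd (dvd_mul_left D₂ D₁) hsf
  have H : LegendreHyp D₁ D₂ := ⟨hD₁0, hD₂0, hsf₁, hsf₂,
    dvd_form_of_hsym hsym₁, dvd_form_of_hsym hsym₂,
    fun P a₁ b₁ hP ha hb => absurd (hcop.isUnit_of_dvd' ⟨a₁, ha⟩ ⟨b₁, hb⟩) hP.not_isUnit⟩
  obtain ⟨x, y, z, hnz, heq⟩ :=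
    legendre_polynomial hodd (D₁.natDegree + D₂.natDegree) D₁ D₂ le_rfl H
  constructor
  · intro v
    set ψ := algebraMap (RatFunc Fq) (v.adicCompletion (RatFunc Fq)) with hψ
    refine ⟨ψ x, ψ y, ψ z, ?_, ?_⟩
    · rintro ⟨hx, hy, hz⟩
      exact hnz ⟨ψ.injective (hx.trans (map_zero ψ).symm),
        ψ.injective (hy.trans (map_zero ψ).symm), ψ.injective (hz.trans (map_zero ψ).symm)⟩
    · have := congrArg ψ heq
      simpa only [map_sub, map_mul, map_pow, map_zero] using this
  · set ψ := toFqtInfty Fq with hψ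
    refine ⟨ψ x, ψ y, ψ z, ?_, ?_⟩
    · rintro ⟨hx, hy, hz⟩
      exact hnz ⟨ψ.injective (hx.trans (map_zero ψ).symm),
        ψ.injective (hy.trans (map_zero ψ).symm), ψ.injective (hz.trans (map_zero ψ).symm)⟩
    · have := congrArg ψ heq
      simpa only [map_sub, map_mul, map_pow, map_zero] using this
end
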